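/- If X is a C-trivial finite CW-complex, then for every real vector bundle ξ over X and every i > 0, the square of the i-th Stiefel-Whitney class vanishes: w_i(ξ)² = 0 in H^{2i}(X;ℤ/2). -/

import Mathlib

set_option autoImplicit false

universe u_1 u_2 u_3 u_4 u_5

/-- An abstract theory of finite CW-complexes with complex/real vector bundles,
integral and mod-2 cohomology, Chern and Stiefel–Whitney classes, reduced
K-theory, and the standard constructions (suspensions, products, spheres,
projective and stunted projective spaces), together with the standard axioms
relating them (naturality, mod-2 reduction of Chern classes, the Bott
integrality theorem, etc.). -/
structure CWTheory where
  /-- Finite CW-complexes. -/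
  Space : Type 1
  /-- (Homotopy classes of) continuous maps. -/
  Hom : Space → Space → Type
  /-- Integral singular cohomology `H^i(X;ℤ)`. -/
  HZ : Space → ℕ → AddCommGrpCat.{u_1}
  /-- Mod-2 singular cohomology `H^i(X;ℤ/2)`. -/
  H2 : Space → ℕ → AddCommGrpCat.{u_2}
  /-- Integral singular homology `H_i(X;ℤ)`. -/
  Hlow : Space → ℕ → AddCommGrpCat.{u_3}
  /-- The map induced in integral cohomology by a map of spaces. -/
  Hmap : ∀ {X Y : Space}, Hom X Y → ∀ i : ℕ, HZ Y i →+ HZ X i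
  /-- The mod-2 reduction homomorphism `ρ₂ : H^i(X;ℤ) → H^i(X;ℤ/2)`. -/
  rho : ∀ (X : Space) (i : ℕ), HZ X i →+ H2 X i
  /-- The cup product on mod-2 cohomology. -/
  cup : ∀ (X : Space) (i j : ℕ), H2 X i → H2 X j → H2 X (i + j)
  /-- Isomorphism classes of complex vector bundles over `X`. -/
  CB : Space → Type
  /-- Isomorphism classes of real vector bundles over `X`. -/
  RB : Space → Type
  /-- Pullback of complex vector bundles. -/
  pullCB : ∀ {X Y : Space}, Hom X Y → CB Y → CB X
  /-- The underlying real bundle `ξ_ℝ` of a complex vector bundle `ξ`. -/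
  realify : ∀ {X : Space}, CB X → RB X
  /-- The complexification `ξ ⊗ ℂ` of a real vector bundle `ξ`. -/
  complexify : ∀ {X : Space}, RB X → CB X
  /-- The Chern class `c_i(ξ) ∈ H^{2i}(X;ℤ)`. -/
  chern : ∀ {X : Space}, CB X → (i : ℕ) → HZ X (2 * i)
  /-- The Stiefel–Whitney class `w_i(ξ) ∈ H^i(X;ℤ/2)`. -/
  sw : ∀ {X : Space}, RB X → (i : ℕ) → H2 X i
  /-- Naturality of Chern classes: `c_i(f^*ξ) = f^*(c_i(ξ))`. -/
  chern_natural : ∀ {X Y : Space} (f : Hom X Y) (ξ : CB Y) (i : ℕ),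
    chern (pullCB f ξ) i = Hmap f (2 * i) (chern ξ i)
  /-- `ρ₂(c_i(ξ)) = w_{2i}(ξ_ℝ)`. -/
  rho_chern : ∀ {X : Space} (ξ : CB X) (i : ℕ),
    rho X (2 * i) (chern ξ i) = sw (realify ξ) (2 * i)
  /-- The total SW class of the underlying real bundle of `ξ ⊗ ℂ` is
  `1 + w_1(ξ)² + w_2(ξ)² + ⋯`: its degree `i+i` part is `w_i(ξ)²`. -/
  sw_complexify : ∀ {X : Space} (ξ : RB X) (i : ℕ),
    sw (realify (complexify ξ)) (i + i) = cup X i i (sw ξ i) (sw ξ i)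
  /-- Reduced complex K-theory `K̃(X)`. -/
  K : Space → AddCommGrpCat.{u_4}
  /-- Reduced real K-theory `K̃O(X)`. -/
  KO : Space → AddCommGrpCat.{u_5}
  /-- The map induced in reduced K-theory by a map of spaces. -/
  Kmap : ∀ {X Y : Space}, Hom X Y → K Y →+ K X
  /-- The stable class in `K̃(X)` of a complex vector bundle. -/
  kcls : ∀ {X : Space}, CB X → K X
  /-- The stable class in `K̃O(X)` of a real vector bundle. -/
  kocls : ∀ {X : Space}, RB X → KO X
  /-- Every class in `K̃(X)` comes from a bundle (up to stabilization). -/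
  kcls_surj : ∀ (X : Space), Function.Surjective (kcls (X := X))
  /-- Every class in `K̃O(X)` comes from a bundle (up to stabilization). -/
  kocls_surj : ∀ (X : Space), Function.Surjective (kocls (X := X))
  /-- The realification homomorphism `r : K̃(X) → K̃O(X)`. -/
  r : ∀ (X : Space), K X →+ KO X
  /-- `r` sends the class of a complex bundle to that of its underlying real bundle. -/
  r_kcls : ∀ {X : Space} (ξ : CB X), r X (kcls ξ) = kocls (realify ξ)
  /-- Naturality of `kcls` under pullback. -/
  kcls_natural : ∀ {X Y : Space} (f : Hom X Y) (ξ : CB Y),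
    kcls (pullCB f ξ) = Kmap f (kcls ξ)
  /-- Chern classes in positive degree are stable invariants. -/
  chern_stable : ∀ {X : Space} (ξ η : CB X), kcls ξ = kcls η →
    ∀ i : ℕ, 0 < i → chern ξ i = chern η i
  /-- Stiefel–Whitney classes in positive degree are stable invariants. -/
  sw_stable : ∀ {X : Space} (ξ η : RB X), kocls ξ = kocls η →
    ∀ i : ℕ, 0 < i → sw ξ i = sw η i
  /-- The set of dimensions of the cells of `X`. -/
  cells : Space → Set ℕ
  /-- Cellular cohomology: if `X` has no cells of dimension `i` then `H^i(X;ℤ) = 0`. -/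
  HZ_of_cells : ∀ (X : Space) (i : ℕ), i ∉ cells X → ∀ x : HZ X i, x = 0
  /-- Every class in `H²(X;ℤ)` is the first Chern class of a complex line bundle. -/
  line : ∀ (X : Space) (u : HZ X (2 * 1)), ∃ ξ : CB X, chern ξ 1 = u
  /-- Suspension. -/
  Susp : Space → Space
  /-- Product of spaces. -/
  Prod' : Space → Space → Space
  /-- The sphere `S^d`. -/
  Sph : ℕ → Space
  /-- Real projective space `ℝP^n`. -/
  RP : ℕ → Space
  /-- Quaternionic projective space `ℍP^n`. -/
  HP : ℕ → Space
  /-- The stunted complex projective space `ℂP^m/ℂP^n`. -/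
  stuntC : ℕ → ℕ → Space
  /-- The stunted quaternionic projective space `ℍP^m/ℍP^n`. -/
  stuntH : ℕ → ℕ → Space
  /-- The stunted real projective space `X_{m,n} = ℝP^m/ℝP^n`. -/
  stuntR : ℕ → ℕ → Space
  /-- `X` is a connected closed orientable smooth manifold. -/
  IsMfld : Space → Prop
  /-- The dimension of `X` (as a CW-complex/manifold). -/
  dim : Space → ℕ
  /-- Suspension of a sphere is a sphere. -/
  Susp_Sph : ∀ d : ℕ, Susp (Sph d) = Sph (d + 1)
  /-- Suspension shifts cells up by one (for connected finite complexes). -/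
  cells_Susp : ∀ X : Space, cells (Susp X) = (· + 1) '' cells X
  /-- `ℂP^m/ℂP^n` has cells in dimensions `2(n+1), …, 2m`. -/
  cells_stuntC : ∀ m n : ℕ, cells (stuntC m n) = {i | ∃ j, n < j ∧ j ≤ m ∧ i = 2 * j}
  /-- `ℍP^m/ℍP^n` has cells in dimensions `4(n+1), …, 4m`. -/
  cells_stuntH : ∀ m n : ℕ, cells (stuntH m n) = {i | ∃ j, n < j ∧ j ≤ m ∧ i = 4 * j}
  /-- `ℝP^n` for `n` odd is a connected closed orientable manifold of dimension `n`. -/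
  RP_mfld : ∀ n : ℕ, Odd n → IsMfld (RP n) ∧ dim (RP n) = n
  /-- `ℍP^1 = S⁴`. -/
  HP_one : HP 1 = Sph 4
  /-- The canonical (quaternionic) line bundle over `ℍP^n`, as a real bundle. -/
  xiHP : ∀ n : ℕ, RB (HP n)
  /-- For `n > 1`, `w₄(ξ)² ≠ 0` for the canonical bundle `ξ` over `ℍP^n`. -/
  sw_xiHP_sq : ∀ n : ℕ, 1 < n →
    cup (HP n) 4 4 (sw (xiHP n) 4) (sw (xiHP n) 4) ≠ 0
  /-- A fixed identification `H^{2n}(S^{2n};ℤ) ≅ ℤ` (sending a generator to `1`). -/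
  genIso : ∀ n : ℕ, 0 < n → (HZ (Sph (2 * n)) (2 * n) ≃+ ℤ)
  /-- Bott integrality: `c_n(ξ)` is divisible by `(n-1)!` times a generator. -/
  bott_div : ∀ (n : ℕ) (hn : 0 < n) (ξ : CB (Sph (2 * n))),
    ((n - 1).factorial : ℤ) ∣ genIso n hn (chern ξ n)
  /-- Bott integrality: every multiple of `(n-1)!` is realized as a top Chern class. -/
  bott_exists : ∀ (n : ℕ) (hn : 0 < n) (m : ℤ), (((n - 1).factorial : ℤ) ∣ m) →
    ∃ ξ : CB (Sph (2 * n)), genIso n hn (chern ξ n) = m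

namespace CWTheory

variable (T : CWTheory)

/-- `X` is C-trivial: every complex vector bundle over `X` has total Chern class `1`,
i.e. `c_i(ξ) = 0` for all `i > 0`. -/
def CTrivial (X : T.Space) : Prop :=
  ∀ ξ : T.CB X, ∀ i : ℕ, 0 < i → T.chern ξ i = 0

/-- `X` is W-trivial: every real vector bundle over `X` has total
Stiefel–Whitney class `1`, i.e. `w_i(ξ) = 0` for all `i > 0`. -/
def WTrivial (X : T.Space) : Prop :=
  ∀ ξ : T.RB X, ∀ i : ℕ, 0 < i → T.sw ξ i = 0

/-- Iterated suspension `Σ^k X`. -/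
def SuspIter (k : ℕ) (X : T.Space) : T.Space :=
  Nat.rec X (fun _ Y => T.Susp Y) k

end CWTheory

theorem CWTheory.CTrivial.sw_realify_two_mul_eq_zero {T : CWTheory} {X : T.Space}
    (h : T.CTrivial X) (η : T.CB X) {i : ℕ} (hi : 0 < i) :
    T.sw (T.realify η) (2 * i) = 0 := by
  rw [← T.rho_chern, h η i hi, map_zero]

/-- If `X` is C-trivial, then for every real vector bundle `ξ` over `X`
and every `i > 0`, `w_i(ξ)² = 0` in `H^{2i}(X;ℤ/2)`. -/
theorem stmt_6 (T : CWTheory) (X : T.Space) (h : T.CTrivial X)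
    (ξ : T.RB X) (i : ℕ) (hi : 0 < i) :
    T.cup X i i (T.sw ξ i) (T.sw ξ i) = 0 := by
  rw [← T.sw_complexify, ← two_mul]
  exact h.sw_realify_two_mul_eq_zero (T.complexify ξ) hi
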